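/- There exist polynomials P₂, P₄, P₆, P₁₀ in ℚ[A₀, A₁, …, A₆], homogeneous of degrees 2, 4, 6 and 10 respectively, such that for every a₀ ∈ ℂ∖{0} and every r = (r₁,…,r₆) ∈ ℂ⁶, writing a_k = a₀·(−1)ᵏ·e_k(r₁,…,r₆) for the coefficients of the sextic f(x) = a₀∏_{i=1}^{6}(x − rᵢ) = a₀x⁶ + a₁x⁵ + ⋯ + a₆ (e_k = k-th elementary symmetric polynomial), one has a₀²·𝔄(r) = P₂(a₀,…,a₆), a₀⁴·𝔅(r) = P₄(a₀,…,a₆), a₀⁶·ℭ(r) = P₆(a₀,…,a₆), and a₀¹⁰·𝔇(r) = P₁₀(a₀,…,a₆). -/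

import Mathlib

/-!
The root-difference invariants `𝔄, 𝔅, ℭ, 𝔇` of a sextic, multiplied by the
appropriate power of the leading coefficient, are given by homogeneous polynomials
(of degrees 2, 4, 6, 10) in the coefficients of the sextic.

Sums over the partitions of `{1,…,6}` into pairs/triples are encoded as normalized
sums over all permutations of `Fin 6` (48 permutations per pair partition, 72 per
triple partition, 12 per (triple partition, bijection)).
-/

noncomputable def invA (r : Fin 6 → ℂ) : ℂ :=
  (1 / 48 : ℂ) * ∑ σ : Equiv.Perm (Fin 6),
    (r (σ 0) - r (σ 1)) ^ 2 * (r (σ 2) - r (σ 3)) ^ 2 * (r (σ 4) - r (σ 5)) ^ 2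

noncomputable def tripleTerm (r : Fin 6 → ℂ) (i j k : Fin 6) : ℂ :=
  (r i - r j) ^ 2 * (r j - r k) ^ 2 * (r k - r i) ^ 2

noncomputable def invB (r : Fin 6 → ℂ) : ℂ :=
  (1 / 72 : ℂ) * ∑ σ : Equiv.Perm (Fin 6),
    tripleTerm r (σ 0) (σ 1) (σ 2) * tripleTerm r (σ 3) (σ 4) (σ 5)

noncomputable def invC (r : Fin 6 → ℂ) : ℂ :=
  (1 / 12 : ℂ) * ∑ σ : Equiv.Perm (Fin 6),
    tripleTerm r (σ 0) (σ 1) (σ 2) * tripleTerm r (σ 3) (σ 4) (σ 5) *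
      ((r (σ 0) - r (σ 3)) ^ 2 * (r (σ 1) - r (σ 4)) ^ 2 * (r (σ 2) - r (σ 5)) ^ 2)

noncomputable def invD (r : Fin 6 → ℂ) : ℂ :=
  ∏ i : Fin 6, ∏ j ∈ Finset.Ioi i, (r i - r j) ^ 2

/-- The `k`-th elementary symmetric polynomial of the six roots. -/
noncomputable def esymm6 (r : Fin 6 → ℂ) (k : ℕ) : ℂ :=
  ∑ t ∈ Finset.powersetCard k Finset.univ, ∏ i ∈ t, r i

/-- The coefficients `a_k = a₀·(−1)ᵏ·e_k(r)` of `a₀·∏ (x − rᵢ) = a₀x⁶ + a₁x⁵ + ⋯ + a₆`. -/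
noncomputable def sexticCoeff (a0 : ℂ) (r : Fin 6 → ℂ) (k : Fin 7) : ℂ :=
  a0 * (-1) ^ (k : ℕ) * esymm6 r (k : ℕ)

/-!
Every root occurs in `𝔄, 𝔅, ℭ, 𝔇` with degree at most `2, 4, 6, 10`: up to a rational factor,
the first three are symmetrizations of `∏ (Xᵢ - Xⱼ)²` over the edges `{i, j}` of a perfect
matching, of two disjoint triangles and of a triangular prism on six vertices (graphs that are
1-, 2- and 3-regular), and `𝔇` is the squared Vandermonde product, in which each root occurs in
five factors. A symmetric polynomial whose degree in one root is at most `D` is a polynomial of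
total degree at most `D` in the elementary symmetric polynomials: in the leading-term proof of
the fundamental theorem, the lex-leading exponent of `e₁^t₁ ⋯ eₙ^tₙ` has first entry
`t₁ + ⋯ + tₙ`. Homogenizing that polynomial to degree `D` with `a₀` and substituting
`eₖ = (-1)ᵏ aₖ / a₀` gives `P_D`.
-/

open Finset

namespace MvPolynomial

variable {σ R S : Type*} [CommRing R] [CommRing S] [Algebra R S]

section Symmetrize

variable [Fintype σ] [DecidableEq σ]

noncomputable def symmetrize (p : MvPolynomial σ R) : MvPolynomial σ R :=
  ∑ τ : Equiv.Perm σ, rename τ p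

theorem isSymmetric_symmetrize (p : MvPolynomial σ R) : (symmetrize p).IsSymmetric := by
  intro π
  simp only [symmetrize, map_sum, rename_rename]
  exact Equiv.sum_comp (Equiv.mulLeft π) (fun τ => rename τ p)

theorem degreeOf_symmetrize_le {p : MvPolynomial σ R} {D : ℕ} (hp : ∀ k, degreeOf k p ≤ D)
    (i : σ) : degreeOf i (symmetrize p) ≤ D := by
  refine (degreeOf_sum_le _ _ _).trans (Finset.sup_le fun τ _ => ?_)
  rw [← τ.apply_symm_apply i, degreeOf_rename_of_injective τ.injective]
  exact hp _

theorem aeval_symmetrize (x : σ → S) (p : MvPolynomial σ R) :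
    aeval x (symmetrize p) = ∑ τ : Equiv.Perm σ, aeval (x ∘ τ) p := by
  simp [symmetrize, aeval_rename]

end Symmetrize

section SquaredDifferences

noncomputable def sqDiffProd (s : Finset (σ × σ)) : MvPolynomial σ R :=
  ∏ e ∈ s, (X e.1 - X e.2) ^ 2

theorem aeval_sqDiffProd (x : σ → S) (s : Finset (σ × σ)) :
    aeval x (sqDiffProd s : MvPolynomial σ R) = ∏ e ∈ s, (x e.1 - x e.2) ^ 2 := by
  simp [sqDiffProd]

variable [DecidableEq σ] [Nontrivial R]

theorem degreeOf_X_sub_X_le (k a b : σ) :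
    degreeOf k (X a - X b : MvPolynomial σ R) ≤ if k = a ∨ k = b then 1 else 0 := by
  refine (degreeOf_sub_le _ _ _).trans ?_
  rw [degreeOf_X, degreeOf_X]
  split_ifs <;> simp_all

theorem degreeOf_sqDiffProd_le (s : Finset (σ × σ)) (k : σ) :
    degreeOf k (sqDiffProd s : MvPolynomial σ R) ≤ 2 * #{e ∈ s | k = e.1 ∨ k = e.2} := by
  rw [card_filter, mul_sum]
  refine (degreeOf_prod_le _ _ _).trans (sum_le_sum fun e _ => ?_)
  exact (degreeOf_pow_le _ _ _).trans (Nat.mul_le_mul_left 2 (degreeOf_X_sub_X_le k e.1 e.2))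

theorem degreeOf_prod_Ioi_sq_sub_le {n : ℕ} (k : Fin n) :
    degreeOf k (∏ i : Fin n, ∏ j ∈ Ioi i, (X i - X j : MvPolynomial (Fin n) R) ^ 2) ≤
      ∑ i : Fin n, ∑ j ∈ Ioi i, 2 * if k = i ∨ k = j then 1 else 0 :=
  (degreeOf_prod_le _ _ _).trans <| sum_le_sum fun i _ => (degreeOf_prod_le _ _ _).trans <|
    sum_le_sum fun j _ =>
      (degreeOf_pow_le _ _ _).trans (Nat.mul_le_mul_left 2 (degreeOf_X_sub_X_le k i j))

end SquaredDifferences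

theorem isSymmetric_prod_Ioi_sq_sub {n : ℕ} :
    (∏ i : Fin n, ∏ j ∈ Ioi i, (X i - X j : MvPolynomial (Fin n) R) ^ 2).IsSymmetric := by
  intro π
  simp only [prod_pow, map_pow, map_prod, map_sub, rename_X]
  rw [π.prod_Ioi_comp_eq_sign_mul_prod (f := fun i j => (X i - X j : MvPolynomial (Fin n) R))
    fun i j => (neg_sub _ _).symm, mul_pow,
    ← Int.cast_pow, ← Units.val_pow_eq_pow_val, Int.units_sq, Units.val_one, Int.cast_one, one_mul]

theorem IsHomogeneous.aeval_smul {φ : MvPolynomial σ R} {m : ℕ} (hφ : φ.IsHomogeneous m)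
    (c : S) (x : σ → S) : MvPolynomial.aeval (c • x) φ = c ^ m * MvPolynomial.aeval x φ := by
  rw [φ.as_sum, map_sum, map_sum, mul_sum]
  refine sum_congr rfl fun u hu => ?_
  simp only [aeval_monomial, Finsupp.prod, Pi.smul_apply, smul_eq_mul, mul_pow, prod_mul_distrib,
    prod_pow_eq_pow_sum]
  rw [← hφ.degree_eq_sum_deg_support hu]
  ring

section Homogenization

variable {n : ℕ}

noncomputable def homogenization (D : ℕ) (F : MvPolynomial (Fin n) R) :
    MvPolynomial (Fin (n + 1)) R :=
  ∑ j ∈ range (D + 1), X 0 ^ (D - j) * rename Fin.succ (homogeneousComponent j F)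

theorem isHomogeneous_homogenization (D : ℕ) (F : MvPolynomial (Fin n) R) :
    (homogenization D F).IsHomogeneous D := by
  refine IsHomogeneous.sum _ _ _ fun j hj => ?_
  have hjD : D - j + j = D := Nat.sub_add_cancel (Nat.lt_succ_iff.mp (mem_range.mp hj))
  simpa only [hjD] using (isHomogeneous_X_pow (0 : Fin (n + 1)) (D - j)).mul
    (homogeneousComponent_isHomogeneous j F).rename_isHomogeneous

theorem sum_range_homogeneousComponent {F : MvPolynomial (Fin n) R} {D : ℕ}
    (hF : F.totalDegree ≤ D) : ∑ j ∈ range (D + 1), homogeneousComponent j F = F := by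
  conv_rhs => rw [← sum_homogeneousComponent F]
  refine (sum_subset (range_subset_range.mpr (by omega)) fun j _ hj => ?_).symm
  exact homogeneousComponent_eq_zero j F (by simpa using hj)

theorem aeval_cons_homogenization {F : MvPolynomial (Fin n) R} {D : ℕ} (hF : F.totalDegree ≤ D)
    (a0 : S) (b : Fin n → S) :
    aeval (Fin.cons a0 (a0 • b) : Fin (n + 1) → S) (homogenization D F) = a0 ^ D * aeval b F := by
  conv_rhs => rw [← sum_range_homogeneousComponent hF, map_sum, mul_sum]
  rw [homogenization, map_sum]
  refine sum_congr rfl fun j hj => ?_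
  rw [map_mul, map_pow, aeval_X, aeval_rename, Fin.cons_zero, Fin.cons_comp_succ,
    (homogeneousComponent_isHomogeneous j F).aeval_smul, ← mul_assoc, ← pow_add,
    Nat.sub_add_cancel (Nat.lt_succ_iff.mp (mem_range.mp hj))]

end Homogenization

section SymmetricDegree

open Fin AddMonoidAlgebra

variable {n : ℕ} [NeZero n]

theorem ofLex_apply_zero_mono {a b : Lex (Fin n →₀ ℕ)} (h : a ≤ b) : ofLex a 0 ≤ ofLex b 0 := by
  rcases (le_iff_eq_or_lt.mp h).imp id Finsupp.Lex.lt_iff.mp with rfl | ⟨i, hlt, hi⟩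
  · exact le_rfl
  · rcases eq_or_ne i 0 with rfl | hne
    · exact hi.le
    · exact (hlt 0 ((Fin.zero_le i).lt_of_ne hne.symm)).le

theorem ofLex_supDegree_apply_zero_le (p : MvPolynomial (Fin n) R) :
    ofLex (p.supDegree toLex) 0 ≤ p.degreeOf 0 := by
  obtain rfl | h0 := eq_or_ne p 0
  · simp [supDegree_zero, show ofLex (⊥ : Lex (Fin n →₀ ℕ)) = 0 from rfl]
  · obtain ⟨u, hu, he⟩ := exists_mem_eq_sup p.support (support_nonempty.mpr h0) toLex
    have hsup : p.supDegree toLex = toLex u := he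
    rw [hsup, ofLex_toLex]
    exact monomial_le_degreeOf 0 hu

theorem totalDegree_monomial_le_accumulate (t : Fin n →₀ ℕ) (c : R) :
    (monomial t c).totalDegree ≤ accumulate n n t 0 := by
  refine (totalDegree_monomial_le t c).trans_eq ?_
  rw [accumulate_apply, Finsupp.sum_fintype _ _ fun _ => rfl]
  exact (sum_congr (filter_true_of_mem fun i _ => Fin.zero_le i) fun _ _ => rfl).symm

theorem IsSymmetric.exists_totalDegree_le_of_supDegree {p : MvPolynomial (Fin n) R}
    (hp : p.IsSymmetric) {D : ℕ} (hD : ofLex (p.supDegree toLex) 0 ≤ D) :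
    ∃ F : MvPolynomial (Fin n) R, F.totalDegree ≤ D ∧
      aeval (fun i : Fin n => esymm (Fin n) R (i + 1)) F = p := by
  induction he : p.supDegree toLex using WellFoundedLT.induction generalizing p with | _ T ih
  subst he
  obtain rfl | h0 := eq_or_ne p 0
  · exact ⟨0, by simp, by simp⟩
  -- `q = c • e^t` has the same leading term as `p`, so `p - q` has a smaller one.
  set c := p.leadingCoeff toLex
  set t : Fin n →₀ ℕ :=
    Finsupp.equivFunOnFinite.symm (invAccumulate n n ↑(ofLex (p.supDegree toLex)))
  set q := esymmAlgHomMonomial (Fin n) t c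
  have hacc : accumulate n n t = ofLex (p.supDegree toLex) :=
    accumulate_invAccumulate le_rfl hp.antitone_supDegree
  have hq : q.supDegree toLex = p.supDegree toLex := by
    rw [← ofLex_inj, DFunLike.ext'_iff, supDegree_esymmAlgHomMonomial _ t le_rfl, hacc]
    rwa [Ne, leadingCoeff_eq_zero toLex.injective]
  have hqF : aeval (fun i : Fin n => esymm (Fin n) R (i + 1)) (monomial t c) = q :=
    (esymmAlgHom_apply _).symm
  have hdeg : (monomial t c).totalDegree ≤ D := by
    refine (totalDegree_monomial_le_accumulate t c).trans ?_
    rw [hacc]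
    exact hD
  obtain hpq | hpq := eq_or_ne p q
  · exact ⟨_, hdeg, hqF.trans hpq.symm⟩
  have hlt : (p - q).supDegree toLex < p.supDegree toLex :=
    (supDegree_sub_lt_of_leadingCoeff_eq toLex.injective hq.symm
      (leadingCoeff_esymmAlgHomMonomial t le_rfl).symm).resolve_right hpq
  obtain ⟨F, hF, hFp⟩ := ih _ hlt (hp.sub (isSymmetric_esymmAlgHomMonomial _ _))
    ((ofLex_apply_zero_mono hlt.le).trans hD) rfl
  exact ⟨F + monomial t c, (totalDegree_add _ _).trans (max_le hF hdeg),
    by rw [map_add, hFp, hqF, sub_add_cancel]⟩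

theorem IsSymmetric.exists_totalDegree_le {p : MvPolynomial (Fin n) R} (hp : p.IsSymmetric)
    {D : ℕ} (hD : degreeOf 0 p ≤ D) :
    ∃ F : MvPolynomial (Fin n) R, F.totalDegree ≤ D ∧
      aeval (fun i : Fin n => esymm (Fin n) R (i + 1)) F = p :=
  hp.exists_totalDegree_le_of_supDegree ((ofLex_supDegree_apply_zero_le p).trans hD)

theorem exists_isHomogeneous_aeval_coeff_of_isSymmetric {p : MvPolynomial (Fin n) R}
    (hp : p.IsSymmetric) {D : ℕ} (hD : degreeOf 0 p ≤ D) :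
    ∃ P : MvPolynomial (Fin (n + 1)) R, P.IsHomogeneous D ∧ ∀ (a0 : S) (x : Fin n → S),
      aeval (fun k : Fin (n + 1) => a0 * (-1) ^ (k : ℕ) * aeval x (esymm (Fin n) R k)) P =
        a0 ^ D * aeval x p := by
  obtain ⟨F, hF, rfl⟩ := hp.exists_totalDegree_le hD
  set signs : Fin (n + 1) → MvPolynomial (Fin (n + 1)) R := fun k => C ((-1) ^ (k : ℕ)) * X k
  refine ⟨aeval signs (homogenization D F), ?_, fun a0 x => ?_⟩
  · simpa only [one_mul] using (isHomogeneous_homogenization D F).aeval signs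
      fun k => isHomogeneous_C_mul_X _ k
  calc _ = aeval (Fin.cons a0 (a0 • fun i : Fin n => aeval x (esymm (Fin n) R (i + 1))))
        (homogenization D F) := by
        rw [← AlgHom.comp_apply, comp_aeval]
        congr 2
        funext k
        refine Fin.cases ?_ (fun i => ?_) k
        · simp [signs]
        · simp only [signs, map_mul, aeval_X, map_pow, map_neg, map_one, Fin.val_succ,
            Fin.cons_succ, Pi.smul_apply, smul_eq_mul]
          have hsq : ((-1 : S) ^ ((i : ℕ) + 1)) ^ 2 = 1 := by
            rw [← pow_mul, pow_mul', neg_one_sq, one_pow]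
          linear_combination (a0 * aeval x (esymm (Fin n) R (i + 1))) * hsq
    _ = _ := by rw [aeval_cons_homogenization hF, ← AlgHom.comp_apply, comp_aeval]

end SymmetricDegree

end MvPolynomial

namespace SexticInvariants

open MvPolynomial

theorem sexticCoeff_eq (a0 : ℂ) (r : Fin 6 → ℂ) :
    sexticCoeff a0 r = fun k : Fin 7 => a0 * (-1) ^ (k : ℕ) * aeval r (esymm (Fin 6) ℚ k) := by
  funext k
  simp [sexticCoeff, esymm6, esymm, map_sum, map_prod]

theorem exists_isHomogeneous_aeval_sexticCoeff {p : MvPolynomial (Fin 6) ℚ} (hp : p.IsSymmetric)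
    {D : ℕ} (hD : degreeOf 0 p ≤ D) :
    ∃ P : MvPolynomial (Fin 7) ℚ, P.IsHomogeneous D ∧
      ∀ a0 r, aeval (sexticCoeff a0 r) P = a0 ^ D * aeval r p := by
  obtain ⟨P, hP, hPeval⟩ := exists_isHomogeneous_aeval_coeff_of_isSymmetric (S := ℂ) hp hD
  exact ⟨P, hP, fun a0 r => by rw [sexticCoeff_eq, hPeval]⟩

theorem exists_isHomogeneous_aeval_sexticCoeff_symmetrize (c : ℚ) (s : Finset (Fin 6 × Fin 6))
    {D : ℕ} (hs : ∀ k, 2 * #{e ∈ s | k = e.1 ∨ k = e.2} ≤ D) :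
    ∃ P : MvPolynomial (Fin 7) ℚ, P.IsHomogeneous D ∧ ∀ a0 r, aeval (sexticCoeff a0 r) P =
      a0 ^ D * (c * ∑ τ : Equiv.Perm (Fin 6), ∏ e ∈ s, (r (τ e.1) - r (τ e.2)) ^ 2) := by
  obtain ⟨P, hP, hPeval⟩ := exists_isHomogeneous_aeval_sexticCoeff
    ((IsSymmetric.C c).mul (isSymmetric_symmetrize (sqDiffProd s)))
    ((degreeOf_C_mul_le _ _ _).trans
      (degreeOf_symmetrize_le (fun k => (degreeOf_sqDiffProd_le s k).trans (hs k)) 0))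
  refine ⟨P, hP, fun a0 r => ?_⟩
  simp [hPeval, aeval_symmetrize, aeval_sqDiffProd]

def perfectMatching : Finset (Fin 6 × Fin 6) := {(0, 1), (2, 3), (4, 5)}

def twoTriangles : Finset (Fin 6 × Fin 6) := {(0, 1), (1, 2), (2, 0), (3, 4), (4, 5), (5, 3)}

def prism : Finset (Fin 6 × Fin 6) :=
  {(0, 1), (1, 2), (2, 0), (3, 4), (4, 5), (5, 3), (0, 3), (1, 4), (2, 5)}

theorem invA_eq (r : Fin 6 → ℂ) : invA r = ((1 / 48 : ℚ) : ℂ) *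
    ∑ τ : Equiv.Perm (Fin 6), ∏ e ∈ perfectMatching, (r (τ e.1) - r (τ e.2)) ^ 2 := by
  simp [invA, perfectMatching, mul_assoc]

theorem invB_eq (r : Fin 6 → ℂ) : invB r = ((1 / 72 : ℚ) : ℂ) *
    ∑ τ : Equiv.Perm (Fin 6), ∏ e ∈ twoTriangles, (r (τ e.1) - r (τ e.2)) ^ 2 := by
  simp [invB, tripleTerm, twoTriangles, mul_assoc]

theorem invC_eq (r : Fin 6 → ℂ) : invC r = ((1 / 12 : ℚ) : ℂ) *
    ∑ τ : Equiv.Perm (Fin 6), ∏ e ∈ prism, (r (τ e.1) - r (τ e.2)) ^ 2 := by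
  simp [invC, tripleTerm, prism, mul_assoc]

end SexticInvariants

open SexticInvariants

/-- There exist homogeneous polynomials `P₂, P₄, P₆, P₁₀` over `ℚ` of degrees
`2, 4, 6, 10` in the seven coefficients such that `a₀²·𝔄(r) = P₂(a₀,…,a₆)`,
`a₀⁴·𝔅(r) = P₄(a₀,…,a₆)`, `a₀⁶·ℭ(r) = P₆(a₀,…,a₆)`, `a₀¹⁰·𝔇(r) = P₁₀(a₀,…,a₆)`. -/
theorem integral_invariants_are_polynomials_in_coefficients :
    ∃ P2 P4 P6 P10 : MvPolynomial (Fin 7) ℚ,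
      P2.IsHomogeneous 2 ∧ P4.IsHomogeneous 4 ∧ P6.IsHomogeneous 6 ∧
      P10.IsHomogeneous 10 ∧
      ∀ (a0 : ℂ), a0 ≠ 0 → ∀ r : Fin 6 → ℂ,
        MvPolynomial.aeval (sexticCoeff a0 r) P2 = a0 ^ 2 * invA r ∧
        MvPolynomial.aeval (sexticCoeff a0 r) P4 = a0 ^ 4 * invB r ∧
        MvPolynomial.aeval (sexticCoeff a0 r) P6 = a0 ^ 6 * invC r ∧
        MvPolynomial.aeval (sexticCoeff a0 r) P10 = a0 ^ 10 * invD r := by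
  obtain ⟨P2, h2, e2⟩ :=
    exists_isHomogeneous_aeval_sexticCoeff_symmetrize (D := 2) (1 / 48) perfectMatching (by decide)
  obtain ⟨P4, h4, e4⟩ :=
    exists_isHomogeneous_aeval_sexticCoeff_symmetrize (D := 4) (1 / 72) twoTriangles (by decide)
  obtain ⟨P6, h6, e6⟩ :=
    exists_isHomogeneous_aeval_sexticCoeff_symmetrize (D := 6) (1 / 12) prism (by decide)
  obtain ⟨P10, h10, e10⟩ := exists_isHomogeneous_aeval_sexticCoeff (D := 10)
    (MvPolynomial.isSymmetric_prod_Ioi_sq_sub (R := ℚ) (n := 6))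
    ((MvPolynomial.degreeOf_prod_Ioi_sq_sub_le 0).trans (by decide))
  refine ⟨P2, P4, P6, P10, h2, h4, h6, h10, fun a0 _ r => ⟨?_, ?_, ?_, ?_⟩⟩
  · rw [e2, invA_eq]
  · rw [e4, invB_eq]
  · rw [e6, invC_eq]
  · simp [e10, invD]
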